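/- arXiv:1101.0947 — 2 statements merged into one kernel-verified Lean document; each statement's English description precedes it below -/
import Mathlib

section
/- Let F_1,…,F_m and G_1,…,G_m be Borel probability measures on ℝ with finite second moments, and let π_1,…,π_m ≥ 0 with Σ_{i=1}^m π_i = 1. Then the squared Mallows distance of the mixtures satisfies ρ_M²(Σ_{i=1}^m π_i F_i, Σ_{i=1}^m π_i G_i) ≤ Σ_{i=1}^m π_i ρ_M²(F_i, G_i). -/
open MeasureTheory

/-- The squared Mallows (Wasserstein-2) distance between two Borel probability
measures on `ℝ`: the infimum of `E (W - V)^2` over all couplings. -/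
noncomputable def mallowsDistSq (F G : Measure ℝ) : ℝ :=
  sInf { r : ℝ | ∃ μ : Measure (ℝ × ℝ), IsProbabilityMeasure μ ∧
    μ.map Prod.fst = F ∧ μ.map Prod.snd = G ∧ r = ∫ p, (p.1 - p.2) ^ 2 ∂μ }

/-! Mixing `ε`-optimal couplings `νᵢ` of `Fᵢ` and `Gᵢ` with the weights `πᵢ` gives a coupling
`Σ πᵢ νᵢ` of the two mixtures whose cost is at most `Σ πᵢ ∫ (x - y)² dνᵢ`, since the cost is
linear in the coupling; then let `ε → 0`. -/

namespace MeasureTheory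

variable {α β ι : Type*} [MeasurableSpace α] [MeasurableSpace β]

def IsCoupling (F : Measure α) (G : Measure β) (μ : Measure (α × β)) : Prop :=
  IsProbabilityMeasure μ ∧ μ.map Prod.fst = F ∧ μ.map Prod.snd = G

lemma Measure.map_finsetSum {f : α → β} (hf : Measurable f) (s : Finset ι)
    (μ : ι → Measure α) : (∑ i ∈ s, μ i).map f = ∑ i ∈ s, (μ i).map f := by
  simp only [← Measure.mapₗ_apply_of_measurable hf]
  exact _root_.map_sum _ μ s

lemma isProbabilityMeasure_finsetSum_smul {s : Finset ι} {π : ι → ℝ} (hπ : ∀ i ∈ s, 0 ≤ π i)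
    (hπ1 : ∑ i ∈ s, π i = 1) (μ : ι → Measure α) [∀ i, IsProbabilityMeasure (μ i)] :
    IsProbabilityMeasure (∑ i ∈ s, ENNReal.ofReal (π i) • μ i) := by
  constructor
  simp only [Measure.finsetSum_apply, Measure.smul_apply, measure_univ, smul_eq_mul, mul_one]
  rw [← ENNReal.ofReal_sum_of_nonneg hπ, hπ1, ENNReal.ofReal_one]

lemma IsCoupling.finsetSum_smul {s : Finset ι} {π : ι → ℝ} (hπ : ∀ i ∈ s, 0 ≤ π i)
    (hπ1 : ∑ i ∈ s, π i = 1) {F : ι → Measure α} {G : ι → Measure β}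
    {ν : ι → Measure (α × β)} (hν : ∀ i, IsCoupling (F i) (G i) (ν i)) :
    IsCoupling (∑ i ∈ s, ENNReal.ofReal (π i) • F i) (∑ i ∈ s, ENNReal.ofReal (π i) • G i)
      (∑ i ∈ s, ENNReal.ofReal (π i) • ν i) := by
  have hprob : ∀ i, IsProbabilityMeasure (ν i) := fun i => (hν i).1
  refine ⟨isProbabilityMeasure_finsetSum_smul hπ hπ1 ν, ?_, ?_⟩
  · simp only [Measure.map_finsetSum measurable_fst, Measure.map_smul, fun i => (hν i).2.1]
  · simp only [Measure.map_finsetSum measurable_snd, Measure.map_smul, fun i => (hν i).2.2]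

lemma integral_finsetSum_measure_le {f : α → ℝ} (hf : 0 ≤ f) (s : Finset ι)
    (μ : ι → Measure α) : ∫ a, f a ∂(∑ i ∈ s, μ i) ≤ ∑ i ∈ s, ∫ a, f a ∂μ i := by
  by_cases hint : Integrable f (∑ i ∈ s, μ i)
  · exact (integral_finsetSum_measure (integrable_finsetSum_measure.1 hint)).le
  · rw [integral_undef hint]
    exact Finset.sum_nonneg fun i _ => integral_nonneg hf

lemma integral_finsetSum_smul_measure_le {f : α → ℝ} (hf : 0 ≤ f) (s : Finset ι) {π : ι → ℝ}
    (hπ : ∀ i ∈ s, 0 ≤ π i) (μ : ι → Measure α) :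
    ∫ a, f a ∂(∑ i ∈ s, ENNReal.ofReal (π i) • μ i) ≤ ∑ i ∈ s, π i * ∫ a, f a ∂μ i := by
  refine (integral_finsetSum_measure_le hf s _).trans_eq (Finset.sum_congr rfl fun i hi => ?_)
  rw [integral_smul_measure, ENNReal.toReal_ofReal (hπ i hi), smul_eq_mul]

end MeasureTheory

lemma mallowsDistSq_le_integral {F G : Measure ℝ} {μ : Measure (ℝ × ℝ)}
    (hμ : IsCoupling F G μ) : mallowsDistSq F G ≤ ∫ p, (p.1 - p.2) ^ 2 ∂μ := by
  refine csInf_le ⟨0, ?_⟩ ⟨μ, hμ.1, hμ.2.1, hμ.2.2, rfl⟩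
  rintro _ ⟨ν, -, -, -, rfl⟩
  exact integral_nonneg fun p => sq_nonneg _

lemma exists_isCoupling_integral_lt (F G : Measure ℝ) [IsProbabilityMeasure F]
    [IsProbabilityMeasure G] {ε : ℝ} (hε : 0 < ε) :
    ∃ μ, IsCoupling F G μ ∧ ∫ p, (p.1 - p.2) ^ 2 ∂μ < mallowsDistSq F G + ε := by
  have hne : { r : ℝ | ∃ μ : Measure (ℝ × ℝ), IsProbabilityMeasure μ ∧
      μ.map Prod.fst = F ∧ μ.map Prod.snd = G ∧ r = ∫ p, (p.1 - p.2) ^ 2 ∂μ }.Nonempty :=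
    ⟨_, F.prod G, inferInstance, by simp, by simp, rfl⟩
  obtain ⟨_, ⟨μ, hprob, hfst, hsnd, rfl⟩, hlt⟩ := Real.lt_sInf_add_pos hne hε
  exact ⟨μ, ⟨hprob, hfst, hsnd⟩, hlt⟩

theorem mallows_mixture_ineq_general (m : ℕ) (F G : Fin m → Measure ℝ)
    (hF : ∀ i, IsProbabilityMeasure (F i)) (hG : ∀ i, IsProbabilityMeasure (G i))
    (π : Fin m → ℝ) (hπ : ∀ i, 0 ≤ π i) (hπ1 : ∑ i, π i = 1) :
    mallowsDistSq (∑ i, ENNReal.ofReal (π i) • F i) (∑ i, ENNReal.ofReal (π i) • G i)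
      ≤ ∑ i, π i * mallowsDistSq (F i) (G i) := by
  refine le_of_forall_pos_le_add fun ε hε => ?_
  choose ν hν hνlt using fun i => exists_isCoupling_integral_lt (F i) (G i) hε
  calc mallowsDistSq (∑ i, ENNReal.ofReal (π i) • F i) (∑ i, ENNReal.ofReal (π i) • G i)
      ≤ ∫ p, (p.1 - p.2) ^ 2 ∂(∑ i, ENNReal.ofReal (π i) • ν i) :=
        mallowsDistSq_le_integral (IsCoupling.finsetSum_smul (fun i _ => hπ i) hπ1 hν)
    _ ≤ ∑ i, π i * ∫ p, (p.1 - p.2) ^ 2 ∂ν i :=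
        integral_finsetSum_smul_measure_le (fun p => sq_nonneg _) _ (fun i _ => hπ i) ν
    _ ≤ ∑ i, π i * (mallowsDistSq (F i) (G i) + ε) :=
        Finset.sum_le_sum fun i _ => mul_le_mul_of_nonneg_left (hνlt i).le (hπ i)
    _ = ∑ i, π i * mallowsDistSq (F i) (G i) + ε := by
        simp only [mul_add, Finset.sum_add_distrib, ← Finset.sum_mul, hπ1, one_mul]

/-- For probability measures `F₁,…,F_m` and `G₁,…,G_m` on `ℝ` with finite
second moments and weights `π_i ≥ 0` summing to `1`, the squared Mallows distance of the
mixtures satisfies `ρ_M²(Σ π_i F_i, Σ π_i G_i) ≤ Σ π_i ρ_M²(F_i, G_i)`. -/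
theorem mallows_mixture_ineq (m : ℕ) (F G : Fin m → Measure ℝ)
    (hF : ∀ i, IsProbabilityMeasure (F i)) (hG : ∀ i, IsProbabilityMeasure (G i))
    (hF2 : ∀ i, Integrable (fun x : ℝ => x ^ 2) (F i))
    (hG2 : ∀ i, Integrable (fun x : ℝ => x ^ 2) (G i))
    (π : Fin m → ℝ) (hπ : ∀ i, 0 ≤ π i) (hπ1 : ∑ i, π i = 1) :
    mallowsDistSq (∑ i, ENNReal.ofReal (π i) • F i) (∑ i, ENNReal.ofReal (π i) • G i)
      ≤ ∑ i, π i * mallowsDistSq (F i) (G i) :=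
  mallows_mixture_ineq_general m F G hF hG π hπ hπ1
end

section
/- Let F_1,…,F_m and G_1,…,G_m be Borel probability measures on ℝ with finite second moments such that F_i and G_i have equal means for each i = 1,…,m, and let F = F_1 * ⋯ * F_m and G = G_1 * ⋯ * G_m be the corresponding convolutions (i.e., F is the distribution of a sum of m independent random variables with laws F_1,…,F_m, and similarly for G). Then ρ_M²(F, G) ≤ Σ_{i=1}^m ρ_M²(F_i, G_i). -/
/-!
Choose near-optimal couplings `(W_i, V_i)` of `(F_i, G_i)` and make the pairs independent.
Then `(∑ W_i, ∑ V_i)` couples the two convolutions, and `∑ W_i - ∑ V_i = ∑ (W_i - V_i)` is a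
sum of independent variables which are centred because `F_i` and `G_i` have equal means, so the
cross terms vanish and its second moment is `∑ E (W_i - V_i)²`.
-/

open MeasureTheory ProbabilityTheory

noncomputable def convolutionOf (m : ℕ) (F : Fin m → Measure ℝ) : Measure ℝ :=
  (Measure.pi F).map fun x => ∑ i, x i

lemma integral_sq_sum_pi_of_integral_eq_zero {ι : Type*} [Fintype ι] {Ω : ι → Type*}
    [∀ i, MeasurableSpace (Ω i)] {μ : (i : ι) → Measure (Ω i)} [∀ i, IsProbabilityMeasure (μ i)]
    {X : Π i, Ω i → ℝ} (hX : ∀ i, MemLp (X i) 2 (μ i)) (hX0 : ∀ i, ∫ ω, X i ω ∂μ i = 0) :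
    ∫ ω, (∑ i, X i (ω i)) ^ 2 ∂Measure.pi μ = ∑ i, ∫ ω, X i ω ^ 2 ∂μ i := by
  have hmeas : AEMeasurable (∑ i, fun ω : Π i, Ω i ↦ X i (ω i)) (Measure.pi μ) :=
    Finset.aemeasurable_sum _ fun i _ ↦
      (hX i).aestronglyMeasurable.aemeasurable.comp_quasiMeasurePreserving
        (Measure.quasiMeasurePreserving_eval _ i)
  have hmean : ∫ ω, (∑ i, fun ω : Π i, Ω i ↦ X i (ω i)) ω ∂Measure.pi μ = 0 := by
    simp only [Finset.sum_apply]
    rw [integral_finsetSum _ fun i _ ↦ integrable_comp_eval ((hX i).integrable one_le_two)]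
    simp [integral_comp_eval (hX _).aestronglyMeasurable, hX0]
  have hvar := variance_sum_pi (μ := μ) hX
  rw [variance_of_integral_eq_zero hmeas hmean] at hvar
  simpa [variance_of_integral_eq_zero (hX _).aestronglyMeasurable.aemeasurable (hX0 _)] using hvar

lemma convolutionOf_map {α : Type*} [MeasurableSpace α] {m : ℕ} {μ : Fin m → Measure α}
    [∀ i, IsFiniteMeasure (μ i)] {f : α → ℝ} (hf : Measurable f) :
    convolutionOf m (fun i => (μ i).map f) = (Measure.pi μ).map fun x => ∑ i, f (x i) := by
  rw [convolutionOf, ← Measure.pi_map_pi fun i => hf.aemeasurable,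
    Measure.map_map (by fun_prop) (by fun_prop)]
  rfl

structure IsCoupling (μ : Measure (ℝ × ℝ)) (F G : Measure ℝ) : Prop where
  isProbabilityMeasure : IsProbabilityMeasure μ
  map_fst : μ.map Prod.fst = F
  map_snd : μ.map Prod.snd = G

namespace IsCoupling

variable {μ : Measure (ℝ × ℝ)} {F G : Measure ℝ}

lemma prod [IsProbabilityMeasure F] [IsProbabilityMeasure G] : IsCoupling (F.prod G) F G :=
  ⟨inferInstance, by simp, by simp⟩

lemma mallowsDistSq_le (h : IsCoupling μ F G) : mallowsDistSq F G ≤ ∫ p, (p.1 - p.2) ^ 2 ∂μ :=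
  csInf_le ⟨0, by rintro _ ⟨ν, -, -, -, rfl⟩; positivity⟩
    ⟨μ, h.isProbabilityMeasure, h.map_fst, h.map_snd, rfl⟩

lemma memLp_fst (h : IsCoupling μ F G) (hF : MemLp id 2 F) : MemLp Prod.fst 2 μ := by
  rwa [← h.map_fst, memLp_map_measure_iff aestronglyMeasurable_id measurable_fst.aemeasurable]
    at hF

lemma memLp_snd (h : IsCoupling μ F G) (hG : MemLp id 2 G) : MemLp Prod.snd 2 μ := by
  rwa [← h.map_snd, memLp_map_measure_iff aestronglyMeasurable_id measurable_snd.aemeasurable]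
    at hG

lemma integral_fst (h : IsCoupling μ F G) : ∫ p, p.1 ∂μ = ∫ x, x ∂F :=
  h.map_fst ▸ (integral_map measurable_fst.aemeasurable aestronglyMeasurable_id).symm

lemma integral_snd (h : IsCoupling μ F G) : ∫ p, p.2 ∂μ = ∫ x, x ∂G :=
  h.map_snd ▸ (integral_map measurable_snd.aemeasurable aestronglyMeasurable_id).symm

lemma integral_sub_eq_zero (h : IsCoupling μ F G) (hF : MemLp id 2 F) (hG : MemLp id 2 G)
    (hmean : ∫ x, x ∂F = ∫ x, x ∂G) : ∫ p, p.1 - p.2 ∂μ = 0 := by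
  have := h.isProbabilityMeasure
  rw [integral_sub ((h.memLp_fst hF).integrable one_le_two)
      ((h.memLp_snd hG).integrable one_le_two), h.integral_fst, h.integral_snd, hmean, sub_self]

end IsCoupling

lemma exists_isCoupling_lt_mallowsDistSq_add (F G : Measure ℝ) [IsProbabilityMeasure F]
    [IsProbabilityMeasure G] {ε : ℝ} (hε : 0 < ε) :
    ∃ μ, IsCoupling μ F G ∧ ∫ p, (p.1 - p.2) ^ 2 ∂μ < mallowsDistSq F G + ε := by
  obtain ⟨hprob, hfst, hsnd⟩ : IsCoupling (F.prod G) F G := .prod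
  have hlt : mallowsDistSq F G < mallowsDistSq F G + ε := lt_add_of_pos_right _ hε
  obtain ⟨_, ⟨μ, hμ, hμfst, hμsnd, rfl⟩, hlt⟩ :=
    exists_lt_of_csInf_lt (by exact ⟨_, F.prod G, hprob, hfst, hsnd, rfl⟩) hlt
  exact ⟨μ, ⟨hμ, hμfst, hμsnd⟩, hlt⟩

/-- The law of `(∑ W_i, ∑ V_i)` for independent pairs `(W_i, V_i) ∼ μ i`. -/
noncomputable def sumCoupling {m : ℕ} (μ : Fin m → Measure (ℝ × ℝ)) : Measure (ℝ × ℝ) :=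
  (Measure.pi μ).map fun x => (∑ i, (x i).1, ∑ i, (x i).2)

lemma isCoupling_sumCoupling {m : ℕ} {μ : Fin m → Measure (ℝ × ℝ)} {F G : Fin m → Measure ℝ}
    (h : ∀ i, IsCoupling (μ i) (F i) (G i)) :
    IsCoupling (sumCoupling μ) (convolutionOf m F) (convolutionOf m G) := by
  have := fun i => (h i).isProbabilityMeasure
  have hT : Measurable fun x : Fin m → ℝ × ℝ => (∑ i, (x i).1, ∑ i, (x i).2) := by fun_prop
  refine ⟨Measure.isProbabilityMeasure_map hT.aemeasurable, ?_, ?_⟩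
  · rw [sumCoupling, Measure.map_map measurable_fst hT, ← funext fun i => (h i).map_fst,
      convolutionOf_map measurable_fst]
    rfl
  · rw [sumCoupling, Measure.map_map measurable_snd hT, ← funext fun i => (h i).map_snd,
      convolutionOf_map measurable_snd]
    rfl

lemma integral_sub_sq_sumCoupling {m : ℕ} {μ : Fin m → Measure (ℝ × ℝ)}
    [∀ i, IsProbabilityMeasure (μ i)] (hX : ∀ i, MemLp (fun p : ℝ × ℝ => p.1 - p.2) 2 (μ i))
    (hX0 : ∀ i, ∫ p, p.1 - p.2 ∂μ i = 0) :
    ∫ p, (p.1 - p.2) ^ 2 ∂sumCoupling μ = ∑ i, ∫ p, (p.1 - p.2) ^ 2 ∂μ i := by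
  rw [sumCoupling, integral_map (by fun_prop) (by fun_prop)]
  simp only [← Finset.sum_sub_distrib]
  exact integral_sq_sum_pi_of_integral_eq_zero hX hX0

lemma mallowsDistSq_convolutionOf_le {m : ℕ} {μ : Fin m → Measure (ℝ × ℝ)}
    {F G : Fin m → Measure ℝ} (h : ∀ i, IsCoupling (μ i) (F i) (G i))
    (hF : ∀ i, MemLp id 2 (F i)) (hG : ∀ i, MemLp id 2 (G i))
    (hmean : ∀ i, ∫ x, x ∂(F i) = ∫ x, x ∂(G i)) :
    mallowsDistSq (convolutionOf m F) (convolutionOf m G)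
      ≤ ∑ i, ∫ p, (p.1 - p.2) ^ 2 ∂μ i := by
  have := fun i => (h i).isProbabilityMeasure
  rw [← integral_sub_sq_sumCoupling (fun i => ((h i).memLp_fst (hF i)).sub ((h i).memLp_snd (hG i)))
    fun i => (h i).integral_sub_eq_zero (hF i) (hG i) (hmean i)]
  exact (isCoupling_sumCoupling h).mallowsDistSq_le

lemma le_sum_of_forall_exists_lt {ι : Type*} [Fintype ι] {a : ℝ} {b : ι → ℝ}
    (h : ∀ ε > 0, ∃ c : ι → ℝ, (∀ i, c i < b i + ε) ∧ a ≤ ∑ i, c i) : a ≤ ∑ i, b i := by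
  refine le_of_forall_pos_lt_add fun ε hε => ?_
  obtain ⟨c, hcb, hac⟩ := h (ε / (Fintype.card ι + 1)) (by positivity)
  calc a ≤ ∑ i, c i := hac
    _ ≤ ∑ i, (b i + ε / (Fintype.card ι + 1)) := Finset.sum_le_sum fun i _ => (hcb i).le
    _ = ∑ i, b i + Fintype.card ι * (ε / (Fintype.card ι + 1)) := by
      rw [Finset.sum_add_distrib, Finset.sum_const, Finset.card_univ, nsmul_eq_mul]
    _ < ∑ i, b i + ε := by
      gcongr
      rw [mul_div_assoc', div_lt_iff₀ (by positivity)]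
      linarith

/-- If `F_i` and `G_i` are probability measures on `ℝ` with finite second
moments and equal means for each `i`, then the squared Mallows distance of the convolutions
satisfies `ρ_M²(F₁ * ⋯ * F_m, G₁ * ⋯ * G_m) ≤ Σ_i ρ_M²(F_i, G_i)`. -/
theorem mallows_convolution_ineq (m : ℕ) (F G : Fin m → Measure ℝ)
    (hF : ∀ i, IsProbabilityMeasure (F i)) (hG : ∀ i, IsProbabilityMeasure (G i))
    (hF2 : ∀ i, Integrable (fun x : ℝ => x ^ 2) (F i))
    (hG2 : ∀ i, Integrable (fun x : ℝ => x ^ 2) (G i))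
    (hmean : ∀ i, ∫ x, x ∂(F i) = ∫ x, x ∂(G i)) :
    mallowsDistSq (convolutionOf m F) (convolutionOf m G)
      ≤ ∑ i, mallowsDistSq (F i) (G i) := by
  refine le_sum_of_forall_exists_lt fun ε hε => ?_
  choose μ hμ hcost using fun i => exists_isCoupling_lt_mallowsDistSq_add (F i) (G i) hε
  refine ⟨_, hcost, mallowsDistSq_convolutionOf_le hμ ?_ ?_ hmean⟩
  · exact fun i => (memLp_two_iff_integrable_sq aestronglyMeasurable_id).2 (hF2 i)
  · exact fun i => (memLp_two_iff_integrable_sq aestronglyMeasurable_id).2 (hG2 i)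
end
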